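/- Let n ≥ 1 and let J be the set of odd integers j with 1 ≤ j < 2^n. For each j ∈ J let σ_j : ℤ[X_{n-1}] → ℝ be a ring homomorphism with σ_j(X_{n-1}) = 2*cos(2πj/2^{n+1}), and set x_j = √(2 + 2*cos(2πj/2^{n+1})) (the extension of σ_j to X_n). Let s : J → {1, −1} and let a ∈ ℤ[X_{n-1}] satisfy Σ_{j∈J} (s_j·x_j − σ_j(a))² ≤ Σ_{j∈J} (s_j·x_j − σ_j(a'))² for every a' ∈ ℤ[X_{n-1}]. For j ∈ J set b_j = 2·x_j/|s_j·x_j − σ_j(a)| and C_j = log(√(b_j² + 1) + |b_j|). Suppose p, q ∈ ℤ[X_{n-1}] satisfy p² − X_n²·q² = 1, q divides p − 1 in ℤ[X_{n-1}], p·q > 0, and for every j ∈ J the sign s_j equals the sign of σ_j(p)·σ_j(q). Then there exists j ∈ J with |log|σ_j(p) + x_j·σ_j(q)|| ≤ C_j. -/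

import Mathlib

/-- `X n = 2 cos(2π/2^(n+2))`. -/
noncomputable def X (n : ℕ) : ℝ := 2 * Real.cos (2 * Real.pi / 2 ^ (n + 2))

/-!
Suppose, to the contrary, that `|log |σ_j p + x_j σ_j q|| > C_j` for every `j`, and write
`p - 1 = q r`. Since `σ_j(p)² - x_j² σ_j(q)² = 1`, the left side equals `arsinh (x_j |σ_j q|)`, so
the assumption says `|σ_j q| · |s_j x_j - σ_j a| > 2`. On the other hand
`σ_j(q) (s_j x_j - σ_j r) = 1 - (σ_j p - s_j x_j σ_j q)`, and the choice of `s_j` makes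
`σ_j p - s_j x_j σ_j q` the Pell conjugate of absolute value at most `1`. Hence `r` approximates
every `s_j x_j` strictly better than `a` does, contradicting the minimality of `a`.

The differences `s_j x_j - σ_j a` are nonzero: `σ_j X_{n-1}` is a root of the Chebyshev polynomial
`C_{2^(n-1)}` and `x_j` one of `C_{2^n}`, both irreducible over `ℤ` by Eisenstein at `2`, so `x_j`
has degree `2^n` while `ℚ(σ_j X_{n-1})`, which contains the image of `σ_j`, has degree `2^(n-1)`.
-/

open Real IntermediateField

namespace Polynomial.Chebyshev

variable (R : Type*) [CommRing R]

theorem C_two_pow_succ (m : ℕ) : C R (2 ^ (m + 1)) = (C R (2 ^ m)).comp (C R 2) := by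
  rw [pow_succ, C_mul]

theorem natDegree_C_two [Nontrivial R] : (C R 2).natDegree = 2 := by
  rw [C_two]
  compute_degree!

theorem monic_C_two [Nontrivial R] : (C R 2).Monic := by
  rw [C_two]
  exact monic_X_pow_sub (by compute_degree!)

theorem monic_C_two_pow [Nontrivial R] (m : ℕ) : (C R (2 ^ m)).Monic := by
  induction m with
  | zero => simp
  | succ m ih =>
    rw [C_two_pow_succ]
    exact ih.comp (monic_C_two R) (by simp [natDegree_C_two])

theorem natDegree_C_two_pow [Nontrivial R] (m : ℕ) : (C R (2 ^ m)).natDegree = 2 ^ m := by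
  induction m with
  | zero => simp
  | succ m ih =>
    rw [C_two_pow_succ, natDegree_comp_eq_of_mul_ne_zero (by
      simp [(monic_C_two_pow R m).leadingCoeff, (monic_C_two R).leadingCoeff]), ih,
      natDegree_C_two, pow_succ]

theorem C_two_pow_succ_eval_zero (m : ℕ) :
    (C R (2 ^ (m + 1))).eval 0 = 2 * ((2 : ℤ) ^ m).negOnePow := by
  rw [C_two_pow_succ, eval_comp]
  simp [C_two, C_eval_neg_two]

theorem C_two_pow_of_charTwo [CharP R 2] (m : ℕ) : C R (2 ^ m) = X ^ 2 ^ m := by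
  induction m with
  | zero => simp
  | succ m ih =>
    rw [C_two_pow_succ, ih, C_two, CharTwo.two_eq_zero (R := R[X]), sub_zero, X_pow_comp, ← pow_mul,
      pow_succ']

theorem irreducible_C_two_pow (m : ℕ) : Irreducible (C ℤ (2 ^ m)) := by
  cases m with
  | zero => simpa using irreducible_X
  | succ m =>
    have hmonic := monic_C_two_pow ℤ (m + 1)
    have hdeg := natDegree_C_two_pow ℤ (m + 1)
    have heis : (C ℤ (2 ^ (m + 1))).IsEisensteinAt (Ideal.span {2}) :=
      { leading := by simp [hmonic.leadingCoeff, Ideal.mem_span_singleton]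
        mem := fun {i} hi => by
          have h := congrArg (coeff · i) (C_two_pow_of_charTwo (ZMod 2) (m + 1))
          rw [← map_C (Int.castRingHom (ZMod 2))] at h
          simp only [coeff_map, coeff_X_pow, if_neg (hdeg ▸ hi).ne] at h
          exact Ideal.mem_span_singleton.2 ((ZMod.intCast_zmod_eq_zero_iff_dvd _ 2).1 h)
        notMem := by
          rw [Ideal.span_singleton_pow, Ideal.mem_span_singleton, coeff_zero_eq_eval_zero,
            C_two_pow_succ_eval_zero]
          rcases Int.units_eq_one_or ((2 : ℤ) ^ m).negOnePow with h | h <;> simp [h] }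
    exact heis.irreducible ((Ideal.span_singleton_prime two_ne_zero).2 Int.prime_two)
      hmonic.isPrimitive (by rw [hdeg]; positivity)

end Polynomial.Chebyshev

theorem abs_arsinh (y : ℝ) : |arsinh y| = arsinh |y| := by
  rcases le_total 0 y with hy | hy
  · rw [abs_of_nonneg hy, abs_of_nonneg (arsinh_nonneg_iff.2 hy)]
  · rw [abs_of_nonpos hy, abs_of_nonpos (arsinh_nonpos_iff.2 hy), arsinh_neg]

theorem log_sqrt_sq_add_one_add_abs (y : ℝ) : log (√(y ^ 2 + 1) + |y|) = arsinh |y| := by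
  rw [arsinh, sq_abs, add_comm (y ^ 2), add_comm (√_)]

theorem abs_log_abs_add_eq_arsinh {P y : ℝ} (h : P ^ 2 = 1 + y ^ 2) :
    |log (|P + y|)| = arsinh |y| := by
  rw [← abs_arsinh]
  rcases sq_eq_sq_iff_eq_or_eq_neg.1 (h.trans (sq_sqrt (by positivity)).symm) with rfl | rfl
  · rw [add_comm, ← exp_arsinh, abs_of_pos (exp_pos _), log_exp]
  · rw [show -√(1 + y ^ 2) + y = -(-y + √(1 + (-y) ^ 2)) by rw [neg_sq]; ring, ← exp_arsinh,
      abs_neg, abs_of_pos (exp_pos _), log_exp, arsinh_neg, abs_neg]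

theorem abs_sub_le_one_of_sq_sub_sq_eq_one {P y : ℝ} (h : P ^ 2 - y ^ 2 = 1) (hPy : 0 ≤ P * y) :
    |P - y| ≤ 1 := by
  have hprod : (P + y) ^ 2 * (P - y) ^ 2 = 1 := by linear_combination (P ^ 2 - y ^ 2 + 1) * h
  have hge : 1 ≤ (P + y) ^ 2 := by nlinarith
  rw [← sq_le_one_iff_abs_le_one]
  nlinarith

theorem sq_sub_lt_of_arsinh_lt {P Q R x s t : ℝ} (hx : 0 < x) (hpell : P ^ 2 - x ^ 2 * Q ^ 2 = 1)
    (hPR : P - 1 = Q * R) (hs : s = 1 ∨ s = -1) (hsign : s = Real.sign (P * Q)) (ht : t ≠ 0)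
    (hfar : arsinh (2 * x / |t|) < |log (|P + x * Q|)|) : (s * x - R) ^ 2 < t ^ 2 := by
  rw [abs_log_abs_add_eq_arsinh (by linear_combination hpell), arsinh_lt_arsinh, abs_mul,
    abs_of_pos hx, div_lt_iff₀ (abs_pos.2 ht)] at hfar
  have hQt : 2 < |Q| * |t| := by nlinarith
  have hnear : |P - s * x * Q| ≤ 1 := by
    refine abs_sub_le_one_of_sq_sub_sq_eq_one ?_ ?_
    · rcases hs with rfl | rfl <;> linear_combination hpell
    · have := Real.sign_mul_nonneg (P * Q)
      rw [← hsign] at this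
      nlinarith
  have hQR : |Q| * |s * x - R| ≤ 2 := by
    rw [← abs_mul, show Q * (s * x - R) = 1 - (P - s * x * Q) by linear_combination hPR]
    obtain ⟨hlo, hhi⟩ := abs_le.1 hnear
    exact abs_le.2 ⟨by linarith, by linarith⟩
  exact sq_lt_sq.2 (lt_of_mul_lt_mul_left (hQR.trans_lt hQt) (abs_nonneg Q))

open Polynomial.Chebyshev

section

open Polynomial

variable {K : Type*} [Field K] [CharZero K]

theorem finrank_adjoin_of_aeval_C_two_pow {m : ℕ} {y : K} (hy : aeval y (C ℤ (2 ^ m)) = 0) :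
    Module.finrank ℚ ℚ⟮y⟯ = 2 ^ m := by
  have hmonic := monic_C_two_pow ℤ m
  have hint : IsIntegral ℚ y :=
    ⟨_, hmonic.map (algebraMap ℤ ℚ), by rwa [← aeval_def, aeval_map_algebraMap]⟩
  rw [adjoin.finrank hint, ← minpoly.eq_of_irreducible_of_monic
    ((IsPrimitive.Int.irreducible_iff_irreducible_map_cast hmonic.isPrimitive).1
      (irreducible_C_two_pow m)) (by rwa [← algebraMap_int_eq, aeval_map_algebraMap])
      (hmonic.map _),
    hmonic.natDegree_map, natDegree_C_two_pow]

theorem notMem_adjoin_of_sq_eq_two_add {m : ℕ} {c y : K} (hc : aeval c (C ℤ (2 ^ m)) = 0)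
    (hy : y ^ 2 = 2 + c) : y ∉ ℚ⟮c⟯ := by
  intro hmem
  have hy_root : aeval y (C ℤ (2 ^ (m + 1))) = 0 := by
    rwa [C_two_pow_succ, aeval_comp, C_two, map_sub, map_pow, aeval_X, map_ofNat, hy,
      add_sub_cancel_left]
  have hc_mem : c ∈ ℚ⟮y⟯ := by
    rw [show c = y ^ 2 - 2 by rw [hy]; ring]
    exact sub_mem (pow_mem (mem_adjoin_simple_self ℚ y) 2) (ofNat_mem _ 2)
  have heq : ℚ⟮y⟯ = ℚ⟮c⟯ :=
    le_antisymm (adjoin_simple_le_iff.2 hmem) (adjoin_simple_le_iff.2 hc_mem)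
  have hdeg := finrank_adjoin_of_aeval_C_two_pow hy_root
  rw [heq, finrank_adjoin_of_aeval_C_two_pow hc, pow_succ] at hdeg
  linarith [Nat.two_pow_pos m]

theorem map_mem_adjoin_map_generator {A : Type*} [CommRing A] {α : A}
    (σ : Algebra.adjoin ℤ {α} →+* K) {χ : Algebra.adjoin ℤ {α}} (hχ : (χ : A) = α)
    (a : Algebra.adjoin ℤ {α}) : σ a ∈ ℚ⟮σ χ⟯ := by
  have ha : a ∈ Algebra.adjoin ℤ (((↑) : Algebra.adjoin ℤ {α} → A) ⁻¹' {α}) := by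
    rw [Algebra.adjoin_adjoin_coe_preimage]
    trivial
  induction ha using Algebra.adjoin_induction with
  | mem y hy =>
    rw [Subtype.ext (hy.trans hχ.symm)]
    exact mem_adjoin_simple_self ℚ _
  | algebraMap k => simp [intCast_mem]
  | add y z _ _ hy hz => simpa using add_mem hy hz
  | mul y z _ _ hy hz => simpa using mul_mem hy hz

theorem sign_mul_sub_map_ne_zero {A : Type*} [CommRing A] {α : A}
    (σ : Algebra.adjoin ℤ {α} →+* K) {χ : Algebra.adjoin ℤ {α}} (hχ : (χ : A) = α) {m : ℕ}
    (hc : aeval (σ χ) (C ℤ (2 ^ m)) = 0) {y : K} (hy : y ^ 2 = 2 + σ χ) {s : K}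
    (hs : s = 1 ∨ s = -1) (a : Algebra.adjoin ℤ {α}) : s * y - σ a ≠ 0 := by
  intro h
  apply notMem_adjoin_of_sq_eq_two_add hc hy
  rcases hs with rfl | rfl
  · rw [one_mul, sub_eq_zero] at h
    exact h ▸ map_mem_adjoin_map_generator σ hχ a
  · rw [show y = σ (-a) by rw [map_neg]; linear_combination -h]
    exact map_mem_adjoin_map_generator σ hχ (-a)

theorem aeval_C_two_pow_two_mul_cos (m : ℕ) {j : ℕ} (hj : Odd j) :
    aeval (2 * cos (2 * π * j / 2 ^ (m + 2))) (C ℤ (2 ^ m)) = 0 := by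
  obtain ⟨k, rfl⟩ := hj
  rw [Chebyshev.aeval_C, C_two_mul_real_cos, mul_eq_zero_iff_left two_ne_zero, cos_eq_zero_iff]
  refine ⟨k, ?_⟩
  field_simp
  push_cast
  ring

theorem sq_sub_map_lt_of_arsinh_lt {A : Type*} [CommRing A] {α : A}
    (σ : Algebra.adjoin ℤ {α} →+* ℝ) {χ : Algebra.adjoin ℤ {α}} (hχ : (χ : A) = α) {m : ℕ}
    (hc : aeval (σ χ) (C ℤ (2 ^ m)) = 0) {y : ℝ} (hy0 : 0 ≤ y) (hy : y ^ 2 = 2 + σ χ)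
    {p q r a : Algebra.adjoin ℤ {α}} (hpell : p ^ 2 - (2 + χ) * q ^ 2 = 1) (hr : p - 1 = q * r)
    {s : ℝ} (hs : s = 1 ∨ s = -1) (hsign : s = Real.sign (σ p * σ q))
    (hfar : arsinh (2 * y / |s * y - σ a|) < |log (|σ p + y * σ q|)|) :
    (s * y - σ r) ^ 2 < (s * y - σ a) ^ 2 := by
  have hy_pos : 0 < y :=
    hy0.lt_of_ne' (by simpa using sign_mul_sub_map_ne_zero σ hχ hc hy (Or.inl rfl) 0)
  refine sq_sub_lt_of_arsinh_lt hy_pos ?_ ?_ hs hsign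
    (sign_mul_sub_map_ne_zero σ hχ hc hy hs a) hfar
  · rw [hy]
    simpa only [map_sub, map_mul, map_add, map_pow, map_one, map_ofNat σ 2] using congrArg σ hpell
  · simpa [sub_eq_iff_eq_add] using congrArg σ hr

end

theorem two_mul_cos_sq (θ : ℝ) : (2 * cos θ) ^ 2 = 2 + 2 * cos (2 * θ) := by
  rw [cos_two_mul]; ring

theorem X_succ_sq (m : ℕ) : X (m + 1) ^ 2 = 2 + X m := by
  have h : 2 * (2 * π / 2 ^ (m + 1 + 2)) = 2 * π / 2 ^ (m + 2) := by
    rw [pow_succ' 2 (m + 2)]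
    field_simp
  rw [X, X, two_mul_cos_sq, h]

theorem stmt15_general (n : ℕ) (hn : 1 ≤ n)
    (J : Finset ℕ) (hJ : ∀ j, j ∈ J ↔ Odd j ∧ 1 ≤ j ∧ j < 2 ^ n)
    (σ : ℕ → (Algebra.adjoin ℤ ({X (n - 1)} : Set ℝ) →+* ℝ))
    (χ : Algebra.adjoin ℤ ({X (n - 1)} : Set ℝ)) (hχ : (χ : ℝ) = X (n - 1))
    (hσ : ∀ j ∈ J, σ j χ = 2 * Real.cos (2 * Real.pi * j / 2 ^ (n + 1)))
    (x : ℕ → ℝ)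
    (hx : ∀ j ∈ J, x j = Real.sqrt (2 + 2 * Real.cos (2 * Real.pi * j / 2 ^ (n + 1))))
    (s : ℕ → ℝ) (hs : ∀ j ∈ J, s j = 1 ∨ s j = -1)
    (a : Algebra.adjoin ℤ ({X (n - 1)} : Set ℝ))
    (ha : ∀ a' : Algebra.adjoin ℤ ({X (n - 1)} : Set ℝ),
      ∑ j ∈ J, (s j * x j - σ j a) ^ 2 ≤ ∑ j ∈ J, (s j * x j - σ j a') ^ 2)
    (b C : ℕ → ℝ)
    (hb : ∀ j ∈ J, b j = 2 * x j / |s j * x j - σ j a|)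
    (hC : ∀ j ∈ J, C j = Real.log (Real.sqrt (b j ^ 2 + 1) + |b j|))
    (p q : Algebra.adjoin ℤ ({X (n - 1)} : Set ℝ))
    (hpell : (p : ℝ) ^ 2 - X n ^ 2 * (q : ℝ) ^ 2 = 1)
    (hdvd : q ∣ p - 1)
    (hsign : ∀ j ∈ J, s j = Real.sign (σ j p * σ j q)) :
    ∃ j ∈ J, |Real.log (|σ j p + x j * σ j q|)| ≤ C j := by
  by_contra! hfar
  obtain ⟨r, hr⟩ := hdvd
  have hpell' : p ^ 2 - (2 + χ) * q ^ 2 = 1 := by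
    have hXsq := X_succ_sq (n - 1)
    rw [Nat.sub_add_cancel hn] at hXsq
    apply Subtype.ext
    change (p : ℝ) ^ 2 - (2 + (χ : ℝ)) * (q : ℝ) ^ 2 = 1
    rwa [hχ, ← hXsq]
  have hcloser : ∀ j ∈ J, (s j * x j - σ j r) ^ 2 < (s j * x j - σ j a) ^ 2 := by
    intro j hj
    have hroot : Polynomial.aeval (σ j χ) (Polynomial.Chebyshev.C ℤ (2 ^ (n - 1))) = 0 := by
      rw [hσ j hj, show n + 1 = n - 1 + 2 by omega]
      exact aeval_C_two_pow_two_mul_cos (n - 1) ((hJ j).1 hj).1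
    have hx0 : 0 ≤ x j := hx j hj ▸ sqrt_nonneg _
    refine sq_sub_map_lt_of_arsinh_lt (σ j) hχ hroot hx0 ?_ hpell' hr (hs j hj) (hsign j hj) ?_
    · rw [hx j hj, hσ j hj, sq_sqrt]
      linarith [neg_one_le_cos (2 * π * j / 2 ^ (n + 1))]
    · have hfarj := hfar j hj
      rwa [hC j hj, log_sqrt_sq_add_one_add_abs, hb j hj, abs_of_nonneg (by positivity)] at hfarj
  have h1 : 1 ∈ J := (hJ 1).2 ⟨odd_one, le_rfl, Nat.one_lt_two_pow (by omega)⟩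
  exact (Finset.sum_lt_sum_of_nonempty ⟨1, h1⟩ hcloser).not_ge (ha r)

theorem stmt15 (n : ℕ) (hn : 1 ≤ n)
    (J : Finset ℕ) (hJ : ∀ j, j ∈ J ↔ Odd j ∧ 1 ≤ j ∧ j < 2 ^ n)
    (σ : ℕ → (Algebra.adjoin ℤ ({X (n - 1)} : Set ℝ) →+* ℝ))
    (χ : Algebra.adjoin ℤ ({X (n - 1)} : Set ℝ)) (hχ : (χ : ℝ) = X (n - 1))
    (hσ : ∀ j ∈ J, σ j χ = 2 * Real.cos (2 * Real.pi * j / 2 ^ (n + 1)))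
    (x : ℕ → ℝ)
    (hx : ∀ j ∈ J, x j = Real.sqrt (2 + 2 * Real.cos (2 * Real.pi * j / 2 ^ (n + 1))))
    (s : ℕ → ℝ) (hs : ∀ j ∈ J, s j = 1 ∨ s j = -1)
    (a : Algebra.adjoin ℤ ({X (n - 1)} : Set ℝ))
    (ha : ∀ a' : Algebra.adjoin ℤ ({X (n - 1)} : Set ℝ),
      ∑ j ∈ J, (s j * x j - σ j a) ^ 2 ≤ ∑ j ∈ J, (s j * x j - σ j a') ^ 2)
    (b C : ℕ → ℝ)
    (hb : ∀ j ∈ J, b j = 2 * x j / |s j * x j - σ j a|)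
    (hC : ∀ j ∈ J, C j = Real.log (Real.sqrt (b j ^ 2 + 1) + |b j|))
    (p q : Algebra.adjoin ℤ ({X (n - 1)} : Set ℝ))
    (hpell : (p : ℝ) ^ 2 - X n ^ 2 * (q : ℝ) ^ 2 = 1)
    (hdvd : q ∣ p - 1)
    (hpos : (p : ℝ) * (q : ℝ) > 0)
    (hsign : ∀ j ∈ J, s j = Real.sign (σ j p * σ j q)) :
    ∃ j ∈ J, |Real.log (|σ j p + x j * σ j q|)| ≤ C j :=
  stmt15_general n hn J hJ σ χ hχ hσ x hx s hs a ha b C hb hC p q hpell hdvd hsign
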